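/- arXiv:2312.03564 — 4 statements merged into one kernel-verified Lean document; each statement's English description precedes it below -/
import Mathlib

section
/- For every n ≥ 1, the number of n×n magog matrices whose (1,2) entry equals 1 is 2^(n−1) − 1. -/
/-- An `n × n` square sign matrix: a `{0, 1, -1}`-matrix whose rows and columns
all sum to 1, whose partial column sums lie in `{0, 1}`, and whose partial row
sums are nonnegative. -/
def IsSquareSign (n : ℕ) (A : Fin n → Fin n → ℤ) : Prop :=
  (∀ i j, A i j = -1 ∨ A i j = 0 ∨ A i j = 1) ∧
  (∀ j, ∑ i, A i j = 1) ∧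
  (∀ i, ∑ j, A i j = 1) ∧
  (∀ i j : Fin n, 0 ≤ ∑ i' ∈ Finset.Iic i, A i' j ∧ ∑ i' ∈ Finset.Iic i, A i' j ≤ 1) ∧
  (∀ i j : Fin n, 0 ≤ ∑ j' ∈ Finset.Iic j, A i j')

/-- An `n × n` magog matrix: a square sign matrix satisfying the
`(i,j)`-special inequalities (stated here with 0-based indices `i, j`,
corresponding to the paper's 1-based `i+1, j+1` with `1 ≤ i, j ≤ n-2`). -/
def IsMagog (n : ℕ) (A : Fin n → Fin n → ℤ) : Prop :=
  IsSquareSign n A ∧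
  ∀ (i j : ℕ) (hi : i + 2 < n) (hj : j + 2 < n),
    0 ≤ (∑ j' ∈ Finset.Iic (⟨j, by omega⟩ : Fin n), A ⟨i + 1, by omega⟩ j')
      + (∑ i' ∈ Finset.Iic (⟨i + 1, by omega⟩ : Fin n), A i' ⟨j + 1, by omega⟩)
      - (∑ i' ∈ Finset.Iic (⟨i, by omega⟩ : Fin n), A i' ⟨j, by omega⟩)

/-!
Let `T k` be the set of columns whose partial column sum over the first `k` rows is `1`, so that
`A i j = [j ∈ T (i + 1)] - [j ∈ T i]`. For a square sign matrix `#T k = k`, the prefix counts of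
`T k` grow with `k`, and the special inequalities compare prefix counts of consecutive rows.
Once the `(1,2)` entry is `1`, i.e. `T 1 = {1}`, these inequalities force every `T k` to be
`{0, …, k}` with one column `m k` removed, where `m` vanishes up to some row and then increases
strictly, up to `m n = n`. Read from `n` downwards, such a sequence enumerates its set of nonzero
values, which can be any proper subset of `{1, …, n - 1}`; hence there are `2 ^ (n - 1) - 1`
matrices.
-/

namespace Magog

open Finset

section Rows

variable {n : ℕ} {T : ℕ → Finset ℕ}

def ofRows (n : ℕ) (T : ℕ → Finset ℕ) : Fin n → Fin n → ℤ :=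
  fun i j => (if (j : ℕ) ∈ T (i + 1) then 1 else 0) - if (j : ℕ) ∈ T i then 1 else 0

structure IsMagogRows (n : ℕ) (T : ℕ → Finset ℕ) : Prop where
  card_eq : ∀ k ≤ n, #(T k) = k
  prefix_le : ∀ k < n, ∀ j < n, #{x ∈ T k | x < j + 1} ≤ #{x ∈ T (k + 1) | x < j + 1}
  special : ∀ k j, 1 ≤ k → k + 2 ≤ n → j + 3 ≤ n →
    #{x ∈ T k | x < j + 1} + (if j ∈ T k then 1 else 0) ≤ #{x ∈ T (k + 1) | x < j + 2}

lemma IsMagogRows.eq_range (hT : IsMagogRows n T) (hsub : T n ⊆ range n) : T n = range n :=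
  eq_of_subset_of_card_le hsub (by rw [hT.card_eq n le_rfl, card_range])

lemma sum_range_indicator (s : Finset ℕ) (J : ℕ) :
    ∑ k ∈ range J, (if k ∈ s then 1 else 0 : ℤ) = #{x ∈ s | x < J} := by
  rw [sum_boole]
  congr 2
  ext
  simp [and_comm]

lemma card_filter_lt_succ (s : Finset ℕ) (J : ℕ) :
    #{x ∈ s | x < J + 1} = #{x ∈ s | x < J} + if J ∈ s then 1 else 0 := by
  have h := sum_range_succ (fun k => if k ∈ s then (1 : ℤ) else 0) J
  rw [sum_range_indicator, sum_range_indicator] at h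
  split_ifs at h ⊢ <;> omega

lemma sum_Iic_fin_eq_sum_range {M : Type*} [AddCommMonoid M] (i : Fin n) (g : ℕ → M) :
    ∑ x ∈ Iic i, g x = ∑ k ∈ range (i + 1), g k := by
  rw [Nat.range_succ_eq_Iic, ← Fin.map_valEmbedding_Iic, sum_map]
  rfl

lemma sum_Iic_indicator (s : Finset ℕ) (j : Fin n) :
    ∑ x ∈ Iic j, (if (x : ℕ) ∈ s then 1 else 0 : ℤ) = #{x ∈ s | x < (j : ℕ) + 1} := by
  rw [← sum_range_indicator]
  exact sum_Iic_fin_eq_sum_range j fun k => if k ∈ s then (1 : ℤ) else 0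

lemma sum_univ_indicator (s : Finset ℕ) :
    ∑ x : Fin n, (if (x : ℕ) ∈ s then 1 else 0 : ℤ) = #{x ∈ s | x < n} := by
  rw [← sum_range_indicator]
  exact Fin.sum_univ_eq_sum_range (fun k => if k ∈ s then (1 : ℤ) else 0) n

lemma sum_Iic_ofRows_col (h0 : T 0 = ∅) (i j : Fin n) :
    ∑ i' ∈ Iic i, ofRows n T i' j = if (j : ℕ) ∈ T (i + 1) then 1 else 0 := by
  refine (sum_Iic_fin_eq_sum_range i fun k => (if (j : ℕ) ∈ T (k + 1) then 1 else 0 : ℤ) -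
    if (j : ℕ) ∈ T k then 1 else 0).trans ?_
  rw [sum_range_sub fun k => if (j : ℕ) ∈ T k then (1 : ℤ) else 0]
  simp [h0]

lemma sum_Iic_ofRows_row (i j : Fin n) :
    ∑ j' ∈ Iic j, ofRows n T i j' =
      (#{x ∈ T (i + 1) | x < (j : ℕ) + 1} : ℤ) - #{x ∈ T i | x < (j : ℕ) + 1} := by
  simp only [ofRows, sum_sub_distrib, sum_Iic_indicator]

lemma sum_ofRows_row (hsub : ∀ k ≤ n, T k ⊆ range n) (i : Fin n) :
    ∑ j, ofRows n T i j = (#(T (i + 1)) : ℤ) - #(T i) := by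
  have hfilter (k : ℕ) (hk : k ≤ n) : {x ∈ T k | x < n} = T k :=
    filter_true_of_mem fun x hx => mem_range.mp (hsub k hk hx)
  simp only [ofRows, sum_sub_distrib, sum_univ_indicator, hfilter _ i.isLt, hfilter _ i.isLt.le]

lemma sum_ofRows_col (h0 : T 0 = ∅) (j : Fin n) :
    ∑ i, ofRows n T i j = if (j : ℕ) ∈ T n then 1 else 0 := by
  refine (Fin.sum_univ_eq_sum_range (fun k => (if (j : ℕ) ∈ T (k + 1) then 1 else 0 : ℤ) -
    if (j : ℕ) ∈ T k then 1 else 0) n).trans ?_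
  rw [sum_range_sub fun k => if (j : ℕ) ∈ T k then (1 : ℤ) else 0]
  simp [h0]

theorem isMagogRows_of_isMagog_ofRows (h0 : T 0 = ∅) (hsub : ∀ k ≤ n, T k ⊆ range n)
    (hA : IsMagog n (ofRows n T)) : IsMagogRows n T := by
  obtain ⟨⟨-, -, hrow, -, hrowp⟩, hmag⟩ := hA
  refine ⟨fun k hk => ?_, fun k hk j hj => ?_, fun k j hk1 hk hj => ?_⟩
  · induction k with
    | zero => simp [h0]
    | succ k ih =>
      have := hrow ⟨k, by omega⟩
      rw [sum_ofRows_row hsub] at this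
      have := ih (by omega)
      simp only at *
      omega
  · have := hrowp ⟨k, hk⟩ ⟨j, hj⟩
    rw [sum_Iic_ofRows_row] at this
    simp only at this
    omega
  · obtain ⟨i, rfl⟩ : ∃ i, k = i + 1 := ⟨k - 1, by omega⟩
    have := hmag i j (by omega) (by omega)
    rw [sum_Iic_ofRows_row, sum_Iic_ofRows_col h0, sum_Iic_ofRows_col h0] at this
    simp only at this
    rw [card_filter_lt_succ _ (j + 1)]
    split_ifs at this ⊢ <;> omega

theorem IsMagogRows.isMagog_ofRows (hT : IsMagogRows n T) (h0 : T 0 = ∅)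
    (hsub : ∀ k ≤ n, T k ⊆ range n) : IsMagog n (ofRows n T) := by
  refine ⟨⟨fun i j => ?_, fun j => ?_, fun i => ?_, fun i j => ?_, fun i j => ?_⟩,
    fun i j hi hj => ?_⟩
  · simp only [ofRows]
    split_ifs <;> simp
  · rw [sum_ofRows_col h0, hT.eq_range (hsub n le_rfl), if_pos (mem_range.mpr j.isLt)]
  · rw [sum_ofRows_row hsub, hT.card_eq _ i.isLt, hT.card_eq _ i.isLt.le]
    push_cast
    ring
  · rw [sum_Iic_ofRows_col h0]
    split_ifs <;> simp
  · rw [sum_Iic_ofRows_row]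
    have := hT.prefix_le i i.isLt j j.isLt
    omega
  · rw [sum_Iic_ofRows_row, sum_Iic_ofRows_col h0, sum_Iic_ofRows_col h0]
    have := hT.special (i + 1) j (by omega) (by omega) (by omega)
    rw [card_filter_lt_succ _ (j + 1)] at this
    simp only
    split_ifs at this ⊢ <;> omega

lemma exists_ofRows_eq {A : Fin n → Fin n → ℤ}
    (hA : ∀ i j : Fin n, 0 ≤ ∑ i' ∈ Iic i, A i' j ∧ ∑ i' ∈ Iic i, A i' j ≤ 1) :
    ∃ T : ℕ → Finset ℕ, T 0 = ∅ ∧ (∀ k ≤ n, T k ⊆ range n) ∧ ofRows n T = A := by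
  let A' (k j : ℕ) : ℤ := if h : k < n ∧ j < n then A ⟨k, h.1⟩ ⟨j, h.2⟩ else 0
  let P (k j : ℕ) : ℤ := ∑ i ∈ range k, A' i j
  have hP_succ (i j : Fin n) : P (i + 1) j = P i j + A i j := by
    simp [P, A', sum_range_succ]
  have hP_Iic (i j : Fin n) : P (i + 1) j = ∑ x ∈ Iic i, A x j := by
    refine (sum_Iic_fin_eq_sum_range i fun k => A' k j).symm.trans (sum_congr rfl fun x _ => ?_)
    simp [A']
  have hP01 (k : ℕ) (hk : k ≤ n) (j : Fin n) : P k j = 0 ∨ P k j = 1 := by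
    rcases k with _ | i
    · simp [P]
    · have := hA ⟨i, hk⟩ j
      rw [hP_Iic ⟨i, hk⟩ j]
      omega
  refine ⟨fun k => {j ∈ range n | P k j = 1}, by simp [P], fun k _ => filter_subset _ _, ?_⟩
  funext i j
  have := hP_succ i j
  rcases hP01 i i.isLt.le j with h | h <;> rcases hP01 (i + 1) i.isLt j with h' | h' <;>
    simp [ofRows, h, h'] <;> omega

lemma ofRows_congr {T' : ℕ → Finset ℕ} (h : ∀ k ≤ n, T k = T' k) :
    ofRows n T = ofRows n T' := by
  funext i j
  simp only [ofRows, h i i.isLt.le, h (i + 1) i.isLt]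

lemma eq_of_ofRows_eq {T' : ℕ → Finset ℕ} (h0 : T 0 = ∅) (h0' : T' 0 = ∅)
    (hsub : ∀ k ≤ n, T k ⊆ range n) (hsub' : ∀ k ≤ n, T' k ⊆ range n)
    (h : ofRows n T = ofRows n T') : ∀ k ≤ n, T k = T' k := by
  rintro (_ | i) hi
  · rw [h0, h0']
  ext x
  by_cases hx : x < n
  · have := sum_Iic_ofRows_col h0 ⟨i, hi⟩ ⟨x, hx⟩
    rw [h, sum_Iic_ofRows_col h0'] at this
    simp only at this
    split_ifs at this <;> simp_all
  · exact iff_of_false (fun h => hx (mem_range.mp (hsub _ hi h)))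
      (fun h => hx (mem_range.mp (hsub' _ hi h)))

end Rows

section Gaps

variable {n : ℕ} {m : ℕ → ℕ} {T : ℕ → Finset ℕ}

def gapRows (m : ℕ → ℕ) (k : ℕ) : Finset ℕ := (range (k + 1)).erase (m k)

-- `m k` is the column missing from row `k`; `m n = n` makes the last row `range n`.
structure IsGapSeq (n : ℕ) (m : ℕ → ℕ) : Prop where
  le : ∀ k ≤ n, m k ≤ k
  one : m 1 = 0
  top : m n = n
  lt_succ : ∀ k < n, 0 < m k → m k < m (k + 1)

lemma card_filter_lt_erase_range {a k : ℕ} (ha : a ≤ k) (J : ℕ) :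
    #{x ∈ (range (k + 1)).erase a | x < J} = min J (k + 1) - if a < J then 1 else 0 := by
  have hrange : {x ∈ range (k + 1) | x < J} = range (min J (k + 1)) := by
    ext x
    simp only [mem_filter, mem_range]
    omega
  rw [filter_erase, hrange]
  split_ifs with haJ
  · rw [card_erase_of_mem (mem_range.mpr (by omega)), card_range]
  · rw [erase_eq_of_notMem (by simp only [mem_range]; omega), card_range, Nat.sub_zero]

lemma gapRows_zero (hm : IsGapSeq n m) : gapRows m 0 = ∅ := by
  simp [gapRows, Nat.le_zero.mp (hm.le 0 (Nat.zero_le n))]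

lemma gapRows_subset (hm : IsGapSeq n m) {k : ℕ} (hk : k ≤ n) : gapRows m k ⊆ range n := by
  intro x hx
  have := hm.top
  simp only [gapRows, mem_erase, mem_range] at hx ⊢
  rcases hk.lt_or_eq with hk | rfl <;> omega

theorem isMagogRows_gapRows (hm : IsGapSeq n m) : IsMagogRows n (gapRows m) where
  card_eq k hk := by
    rw [gapRows, card_erase_of_mem (mem_range.mpr (by have := hm.le k hk; omega)), card_range,
      Nat.add_sub_cancel]
  prefix_le k hk j _ := by
    have := hm.lt_succ k hk
    have := hm.le k hk.le
    have := hm.le (k + 1) hk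
    rw [gapRows, gapRows, card_filter_lt_erase_range (by omega),
      card_filter_lt_erase_range (by omega)]
    split_ifs <;> omega
  special k j _ hk _ := by
    have := hm.lt_succ k (by omega)
    have := hm.le k (by omega)
    have := hm.le (k + 1) (by omega)
    rw [gapRows, gapRows, card_filter_lt_erase_range (by omega),
      card_filter_lt_erase_range (by omega)]
    simp only [mem_erase, mem_range]
    split_ifs <;> omega

lemma range_subset_of_le_card_filter {s : Finset ℕ} {J : ℕ} (h : J ≤ #{x ∈ s | x < J}) :
    range J ⊆ s := by
  have hsub : {x ∈ s | x < J} ⊆ range J := fun x hx => mem_range.mpr (mem_filter.mp hx).2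
  rw [← eq_of_subset_of_card_le hsub (by rwa [card_range])]
  exact filter_subset _ _

lemma subset_range_of_card_le_card_filter {s : Finset ℕ} {J : ℕ}
    (h : #s ≤ #{x ∈ s | x < J}) : s ⊆ range J := by
  rw [← eq_of_subset_of_card_le (filter_subset _ s) h]
  exact fun x hx => mem_range.mpr (mem_filter.mp hx).2

lemma exists_eq_erase_range {s : Finset ℕ} {k : ℕ} (hs : s ⊆ range (k + 1)) (hcard : #s = k) :
    ∃ a ≤ k, s = (range (k + 1)).erase a := by
  obtain ⟨a, ha, has⟩ := exists_mem_notMem_of_card_lt_card (s := s) (t := range (k + 1))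
    (by rw [card_range]; omega)
  refine ⟨a, Nat.lt_succ_iff.mp (mem_range.mp ha), eq_of_subset_of_card_le ?_ ?_⟩
  · exact fun x hx => mem_erase.mpr ⟨fun h => has (h ▸ hx), hs hx⟩
  · rw [card_erase_of_mem ha, card_range, hcard, Nat.add_sub_cancel]

lemma exists_erase_range_succ (hT : IsMagogRows n T) {k a : ℕ} (hk1 : 1 ≤ k) (hk : k + 2 ≤ n)
    (hsub : T (k + 1) ⊆ range n) (ha : a ≤ k) (hTk : T k = (range (k + 1)).erase a) :
    ∃ b ≤ k + 1, T (k + 1) = (range (k + 2)).erase b ∧ (0 < a → a < b) := by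
  have hcard := hT.card_eq (k + 1) (by omega)
  have hhead (ha0 : 0 < a) : range (a + 1) ⊆ T (k + 1) := by
    obtain ⟨c, rfl⟩ : ∃ c, a = c + 1 := ⟨a - 1, by omega⟩
    apply range_subset_of_le_card_filter (J := c + 2)
    have := hT.special k c hk1 hk (by omega)
    rw [hTk, card_filter_lt_erase_range ha, if_neg (by omega)] at this
    simp only [mem_erase, mem_range] at this
    rw [if_pos (by omega)] at this
    omega
  have htail : T (k + 1) ⊆ range (k + 2) := by
    rcases (show k + 2 = n ∨ a = k ∨ (k + 3 ≤ n ∧ a < k) by omega) with h | h | ⟨h, h'⟩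
    · rwa [h]
    · have := eq_of_subset_of_card_le (hhead (by omega)) (by rw [hcard, card_range, h])
      rw [← this, h]
      exact range_subset_range.mpr (by omega)
    · apply subset_range_of_card_le_card_filter
      have := hT.special k k hk1 hk (by omega)
      rw [hTk, card_filter_lt_erase_range ha, if_pos (by omega)] at this
      simp only [mem_erase, mem_range] at this
      rw [if_pos (by omega)] at this
      omega
  obtain ⟨b, hb, hTb⟩ := exists_eq_erase_range htail hcard
  refine ⟨b, hb, hTb, fun ha0 => ?_⟩
  by_contra hab
  have := hhead ha0 (mem_range.mpr (show b < a + 1 by omega))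
  simp [hTb] at this

noncomputable def mex (s : Finset ℕ) : ℕ := sInf {j | j ∉ s}

lemma mex_erase_range {a k : ℕ} (ha : a ≤ k) : mex ((range (k + 1)).erase a) = a := by
  refine IsLeast.csInf_eq ⟨by simp, fun j hj => ?_⟩
  simp only [Set.mem_ofPred_eq, mem_erase, mem_range, not_and] at hj
  by_contra h
  exact hj (by omega) (by omega)

lemma IsMagogRows.exists_eq_erase_range (hT : IsMagogRows n T) (h0 : T 0 = ∅) (h1 : T 1 = {1})
    (hsub : ∀ k ≤ n, T k ⊆ range n) {k : ℕ} (hk : k ≤ n) :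
    ∃ a ≤ k, T k = (range (k + 1)).erase a := by
  rcases (show k = 0 ∨ (1 ≤ k ∧ k < n) ∨ k = n by omega) with rfl | ⟨hk1, hkn⟩ | rfl
  · exact ⟨0, le_rfl, by rw [h0]; rfl⟩
  · induction k, hk1 using Nat.le_induction with
    | base => exact ⟨0, Nat.zero_le 1, by rw [h1]; decide⟩
    | succ k hk1 ih =>
      obtain ⟨a, ha, hTk⟩ := ih (by omega) (by omega)
      obtain ⟨b, hb, hTb, -⟩ :=
        exists_erase_range_succ hT hk1 (by omega) (hsub _ (by omega)) ha hTk
      exact ⟨b, hb, hTb⟩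
  · refine ⟨k, le_rfl, ?_⟩
    rw [range_add_one, erase_insert notMem_range_self]
    exact hT.eq_range (hsub k le_rfl)

theorem exists_isGapSeq (hT : IsMagogRows n T) (h0 : T 0 = ∅) (h1 : T 1 = {1})
    (hsub : ∀ k ≤ n, T k ⊆ range n) : ∃ m, IsGapSeq n m ∧ ∀ k ≤ n, T k = gapRows m k := by
  have hrow (k : ℕ) (hk : k ≤ n) : T k = gapRows (fun k => mex (T k)) k ∧ mex (T k) ≤ k := by
    obtain ⟨a, ha, hTk⟩ := hT.exists_eq_erase_range h0 h1 hsub hk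
    rw [gapRows, hTk, mex_erase_range ha]
    exact ⟨rfl, ha⟩
  have htop : mex (T n) = n := by
    rw [hT.eq_range (hsub n le_rfl), ← erase_insert notMem_range_self, ← range_add_one,
      mex_erase_range le_rfl]
  refine ⟨fun k => mex (T k), ⟨fun k hk => (hrow k hk).2, ?_, htop, fun k hk ha => ?_⟩,
    fun k hk => (hrow k hk).1⟩
  · rw [h1, show ({1} : Finset ℕ) = (range 2).erase 0 by decide, mex_erase_range (Nat.zero_le 1)]
  · have hle := (hrow k hk.le).2
    by_cases hkn : k + 1 = n
    · simp only [hkn, htop]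
      omega
    obtain ⟨b, hb, hTb, hab⟩ := exists_erase_range_succ hT (k := k) (by omega) (by omega)
      (hsub _ (by omega)) hle (hrow k hk.le).1
    show mex (T k) < mex (T (k + 1))
    rw [hTb, mex_erase_range hb]
    exact hab ha

end Gaps

section Subsets

variable {n : ℕ} {S : Finset ℕ} {m : ℕ → ℕ}

lemma lt_of_forall_lt_succ (h : ∀ k < n, 0 < m k → m k < m (k + 1)) {i j : ℕ} (hi : 0 < m i)
    (hij : i < j) (hj : j ≤ n) : m i < m j := by
  induction j, hij using Nat.le_induction with
  | base => exact h i (by omega) hi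
  | succ j hij ih =>
    have := ih (by omega)
    exact this.trans (h j (by omega) (by omega))

lemma le_of_forall_lt_succ (h : ∀ k < n, 0 < m k → m k < m (k + 1)) {i j : ℕ} (hi : 0 < m i)
    (hij : i ≤ j) (hj : j ≤ n) : m i ≤ m j := by
  rcases hij.eq_or_lt with rfl | hij
  · exact le_rfl
  · exact (lt_of_forall_lt_succ h hi hij hj).le

-- `0` when no element of `S` lies below `b`.
def maxBelow (S : Finset ℕ) (b : ℕ) : ℕ := {x ∈ S | x < b}.sup id

lemma maxBelow_spec {b : ℕ} (h : 0 < maxBelow S b) : maxBelow S b ∈ S ∧ maxBelow S b < b := by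
  obtain ⟨x, hx, hxe⟩ := exists_mem_eq_sup {x ∈ S | x < b}
    (nonempty_iff_ne_empty.mpr fun he => by simp [maxBelow, he] at h) id
  rw [maxBelow, hxe]
  exact mem_filter.mp hx

lemma le_maxBelow {b s : ℕ} (hs : s ∈ S) (hsb : s < b) : s ≤ maxBelow S b :=
  le_sup (f := id) (mem_filter.mpr ⟨hs, hsb⟩)

lemma maxBelow_eq {a b : ℕ} (ha : 0 < a → a ∈ S ∧ a < b) (hmax : ∀ s ∈ S, s < b → s ≤ a) :
    maxBelow S b = a := by
  refine le_antisymm (Finset.sup_le fun s hs => hmax s (mem_filter.mp hs).1 (mem_filter.mp hs).2) ?_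
  rcases Nat.eq_zero_or_pos a with rfl | h
  · exact Nat.zero_le _
  · exact le_maxBelow (ha h).1 (ha h).2

-- Read downwards from `n`: each gap is the largest element of `S` below the next one.
def gapSeq (n : ℕ) (S : Finset ℕ) (k : ℕ) : ℕ := (maxBelow S)^[n - k] n

lemma gapSeq_self : gapSeq n S n = n := by
  simp [gapSeq]

lemma gapSeq_of_lt {k : ℕ} (hk : k < n) : gapSeq n S k = maxBelow S (gapSeq n S (k + 1)) := by
  rw [gapSeq, gapSeq, show n - k = n - (k + 1) + 1 by omega, Function.iterate_succ_apply']

def gapSet (n : ℕ) (m : ℕ → ℕ) : Finset ℕ := ((Ioo 0 n).image m).erase 0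

theorem isGapSeq_gapSeq (hS : #S + 2 ≤ n) : IsGapSeq n (gapSeq n S) := by
  have hspec (k : ℕ) (hk : k < n) (h : 0 < gapSeq n S k) :
      gapSeq n S k ∈ S ∧ gapSeq n S k < gapSeq n S (k + 1) := by
    rw [gapSeq_of_lt hk] at h ⊢
    exact maxBelow_spec h
  have hstep (k : ℕ) (hk : k < n) (h : 0 < gapSeq n S k) := (hspec k hk h).2
  refine ⟨fun k hk => ?_, ?_, gapSeq_self, hstep⟩
  · induction hk using Nat.decreasingInduction with
    | self => exact gapSeq_self.le
    | of_succ k hk ih =>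
      rcases Nat.eq_zero_or_pos (gapSeq n S k) with h | h
      · omega
      · have := hstep k hk h
        omega
  · by_contra hne
    have hpos (k : ℕ) (hk : k ∈ Ioo 0 n) : 0 < gapSeq n S k :=
      (Nat.pos_of_ne_zero hne).trans_le
        (le_of_forall_lt_succ hstep (Nat.pos_of_ne_zero hne) (mem_Ioo.mp hk).1 (mem_Ioo.mp hk).2.le)
    have hmono : StrictMonoOn (gapSeq n S) (Ioo 0 n : Finset ℕ) := fun i hi j hj hij =>
      lt_of_forall_lt_succ hstep (hpos i (mem_coe.mp hi)) hij (mem_Ioo.mp (mem_coe.mp hj)).2.le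
    have hcard : #(Ioo 0 n) ≤ #S :=
      card_le_card_of_injOn (gapSeq n S)
        (fun k hk => (hspec k (mem_Ioo.mp hk).2 (hpos k hk)).1) hmono.injOn
    rw [Nat.card_Ioo] at hcard
    omega

lemma card_add_two_le_of_ssubset_Ioo (hS : S ⊂ Ioo 0 n) : #S + 2 ≤ n := by
  have := card_lt_card hS
  rw [Nat.card_Ioo] at this
  omega

theorem gapSet_gapSeq (hS : S ⊂ Ioo 0 n) : gapSet n (gapSeq n S) = S := by
  have hm := isGapSeq_gapSeq (card_add_two_le_of_ssubset_Ioo hS)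
  ext s
  simp only [gapSet, mem_erase, mem_image, mem_Ioo]
  constructor
  · rintro ⟨hs0, k, ⟨-, hk⟩, rfl⟩
    rw [gapSeq_of_lt hk] at hs0 ⊢
    exact (maxBelow_spec (Nat.pos_of_ne_zero hs0)).1
  · intro hs
    have hsn := mem_Ioo.mp (hS.subset hs)
    have hex : ∃ k, s < gapSeq n S k := ⟨n, by rw [gapSeq_self]; exact hsn.2⟩
    have hkn : Nat.find hex ≤ n := Nat.find_min' hex (by rw [gapSeq_self]; exact hsn.2)
    obtain ⟨k, hk⟩ : ∃ k, Nat.find hex = k + 1 := by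
      refine Nat.exists_eq_add_one.mpr (Nat.pos_of_ne_zero fun h0 => ?_)
      have := Nat.find_spec hex
      rw [h0, Nat.le_zero.mp (hm.le 0 (Nat.zero_le n))] at this
      omega
    have hlt : s < gapSeq n S (k + 1) := hk ▸ Nat.find_spec hex
    have hle : gapSeq n S k ≤ s := not_lt.mp (Nat.find_min hex (by omega))
    have hk1 : k ≠ 0 := by
      rintro rfl
      rw [hm.one] at hlt
      omega
    refine ⟨by omega, k, ⟨by omega, by omega⟩, le_antisymm hle ?_⟩
    rw [gapSeq_of_lt (by omega)]
    exact le_maxBelow hs hlt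

theorem gapSeq_gapSet (hm : IsGapSeq n m) {k : ℕ} (hk : k ≤ n) :
    gapSeq n (gapSet n m) k = m k := by
  induction hk using Nat.decreasingInduction with
  | self => rw [gapSeq_self, hm.top]
  | of_succ k hk ih =>
    have hm0 : m 0 = 0 := Nat.le_zero.mp (hm.le 0 (Nat.zero_le n))
    rw [gapSeq_of_lt hk, ih]
    refine maxBelow_eq (fun ha => ⟨?_, hm.lt_succ k hk ha⟩) fun s hs hsb => ?_
    · have hk0 : 0 < k := Nat.pos_of_ne_zero fun h => by simp [h, hm0] at ha
      exact mem_erase.mpr ⟨ha.ne', mem_image.mpr ⟨k, mem_Ioo.mpr ⟨hk0, hk⟩, rfl⟩⟩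
    · obtain ⟨hs0, hs⟩ := mem_erase.mp hs
      obtain ⟨j, hj, rfl⟩ := mem_image.mp hs
      have hj := mem_Ioo.mp hj
      have hjk : j ≤ k := by
        by_contra hjk
        have := le_of_forall_lt_succ hm.lt_succ (by omega) (show k + 1 ≤ j by omega) hj.2.le
        omega
      exact le_of_forall_lt_succ hm.lt_succ (Nat.pos_of_ne_zero hs0) hjk hk.le

theorem gapSet_ssubset (hm : IsGapSeq n m) (hn : 1 < n) : gapSet n m ⊂ Ioo 0 n := by
  have hsub : gapSet n m ⊆ Ioo 0 n := by
    intro x hx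
    obtain ⟨hx0, hx⟩ := mem_erase.mp hx
    obtain ⟨k, hk, rfl⟩ := mem_image.mp hx
    have hk := mem_Ioo.mp hk
    have := hm.le k hk.2.le
    exact mem_Ioo.mpr ⟨Nat.pos_of_ne_zero hx0, by omega⟩
  refine ssubset_of_subset_of_ne hsub fun h => ?_
  have h0 : 0 ∈ (Ioo 0 n).image m := mem_image.mpr ⟨1, mem_Ioo.mpr ⟨Nat.one_pos, hn⟩, hm.one⟩
  have := congrArg card h
  rw [gapSet, card_erase_of_mem h0] at this
  have := card_image_le (s := Ioo 0 n) (f := m)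
  have := card_pos.mpr ⟨1, mem_Ioo.mpr ⟨Nat.one_pos, hn⟩⟩
  omega

end Subsets

section Count

variable {n : ℕ}

lemma ofRows_zero_one_eq_one_iff {T : ℕ → Finset ℕ} (h0 : T 0 = ∅) (h1 : #(T 1) = 1)
    (hn : 1 < n) : ofRows n T ⟨0, by omega⟩ ⟨1, hn⟩ = 1 ↔ T 1 = {1} := by
  obtain ⟨a, ha⟩ := card_eq_one.mp h1
  simp [ofRows, h0, ha, eq_comm]

def magogOfSubset (n : ℕ) (S : Finset ℕ) : Fin n → Fin n → ℤ := ofRows n (gapRows (gapSeq n S))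

theorem isMagog_magogOfSubset {S : Finset ℕ} (hS : #S + 2 ≤ n) (hn : 1 < n) :
    IsMagog n (magogOfSubset n S) ∧ magogOfSubset n S ⟨0, by omega⟩ ⟨1, hn⟩ = 1 := by
  have hm := isGapSeq_gapSeq hS
  have hrows := isMagogRows_gapRows hm
  refine ⟨hrows.isMagog_ofRows (gapRows_zero hm) fun k hk => gapRows_subset hm hk, ?_⟩
  rw [magogOfSubset, ofRows_zero_one_eq_one_iff (gapRows_zero hm) (hrows.card_eq 1 hn.le),
    gapRows, hm.one]
  decide

theorem eq_of_magogOfSubset_eq {S₁ S₂ : Finset ℕ} (hS₁ : S₁ ⊂ Ioo 0 n) (hS₂ : S₂ ⊂ Ioo 0 n)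
    (h : magogOfSubset n S₁ = magogOfSubset n S₂) : S₁ = S₂ := by
  have hm₁ := isGapSeq_gapSeq (card_add_two_le_of_ssubset_Ioo hS₁)
  have hm₂ := isGapSeq_gapSeq (card_add_two_le_of_ssubset_Ioo hS₂)
  have hrows := eq_of_ofRows_eq (gapRows_zero hm₁) (gapRows_zero hm₂)
    (fun k hk => gapRows_subset hm₁ hk) (fun k hk => gapRows_subset hm₂ hk) h
  have hgaps (k : ℕ) (hk : k ≤ n) : gapSeq n S₁ k = gapSeq n S₂ k := by
    rw [← mex_erase_range (hm₁.le k hk), ← mex_erase_range (hm₂.le k hk)]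
    exact congrArg mex (hrows k hk)
  rw [← gapSet_gapSeq hS₁, ← gapSet_gapSeq hS₂, gapSet, gapSet,
    image_congr fun k hk => hgaps k (mem_Ioo.mp hk).2.le]

theorem exists_magogOfSubset_eq {A : Fin n → Fin n → ℤ} (hA : IsMagog n A) (hn : 1 < n)
    (h01 : A ⟨0, by omega⟩ ⟨1, hn⟩ = 1) : ∃ S ⊂ Ioo 0 n, magogOfSubset n S = A := by
  obtain ⟨T, h0, hsub, rfl⟩ := exists_ofRows_eq hA.1.2.2.2.1
  have hT := isMagogRows_of_isMagog_ofRows h0 hsub hA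
  have h1 := (ofRows_zero_one_eq_one_iff h0 (hT.card_eq 1 hn.le) hn).mp h01
  obtain ⟨m, hm, hTm⟩ := exists_isGapSeq hT h0 h1 hsub
  refine ⟨gapSet n m, gapSet_ssubset hm hn, ofRows_congr fun k hk => ?_⟩
  rw [hTm k hk, gapRows, gapRows, gapSeq_gapSet hm hk]

theorem card_magog_zero_one (hn : 1 < n) :
    Nat.card {A : Fin n → Fin n → ℤ // IsMagog n A ∧ A ⟨0, by omega⟩ ⟨1, hn⟩ = 1} =
      2 ^ (n - 1) - 1 := by
  let f (S : (Ioo 0 n).ssubsets) :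
      {A : Fin n → Fin n → ℤ // IsMagog n A ∧ A ⟨0, by omega⟩ ⟨1, hn⟩ = 1} :=
    ⟨magogOfSubset n S,
      isMagog_magogOfSubset (card_add_two_le_of_ssubset_Ioo (mem_ssubsets.mp S.2)) hn⟩
  have hf : Function.Bijective f := by
    refine ⟨fun S₁ S₂ h => Subtype.ext ?_, fun A => ?_⟩
    · exact eq_of_magogOfSubset_eq (mem_ssubsets.mp S₁.2) (mem_ssubsets.mp S₂.2)
        (congrArg Subtype.val h)
    · obtain ⟨S, hS, hSA⟩ := exists_magogOfSubset_eq A.2.1 hn A.2.2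
      exact ⟨⟨S, mem_ssubsets.mpr hS⟩, Subtype.ext hSA⟩
  rw [← Nat.card_congr (Equiv.ofBijective f hf), Nat.card_eq_finsetCard, ssubsets,
    card_erase_of_mem (mem_powerset_self _), card_powerset, Nat.card_Ioo, Nat.sub_zero]

end Count

end Magog

/-- The number of `n × n` magog matrices whose `(1,2)` entry equals `1` is
`2 ^ (n - 1) - 1`. -/
theorem card_magog_12 (n : ℕ) (hn : 0 < n) :
    Nat.card {A : Fin n → Fin n → ℤ //
        IsMagog n A ∧ ∃ h : 1 < n, A ⟨0, hn⟩ ⟨1, h⟩ = 1} =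
      2 ^ (n - 1) - 1 := by
  rcases (show n = 1 ∨ 1 < n by omega) with rfl | h1
  · exact Nat.card_eq_zero.mpr (Or.inl ⟨fun A => lt_irrefl 1 A.2.2.1⟩)
  · rw [← Magog.card_magog_zero_one h1]
    exact Nat.card_congr (Equiv.subtypeEquivRight fun A => by simp [h1])
end

section
/- For every n ≥ 1 and every n×n square sign matrix A, the inversion number satisfies inv(A) ≤ C(n,2) = n(n−1)/2; moreover the unique n×n square sign matrix with inv(A) = C(n,2) is the antidiagonal permutation matrix, i.e. the matrix with a_{ij} = 1 when i + j = n + 1 and a_{ij} = 0 otherwise. -/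
/-- The inversion number `inv(A) = ∑_{k<i} ∑_{j<l} a_{ij} a_{kl}`. -/
def invNum (n : ℕ) (A : Fin n → Fin n → ℤ) : ℤ :=
  ∑ i : Fin n, ∑ j : Fin n, ∑ k : Fin n, ∑ l : Fin n,
    if k < i ∧ j < l then A i j * A k l else 0

/-!
Since every column sums to `1`, `C(n,2) = ∑_{j<l} (∑_i a_ij) (∑_k a_kl)`; splitting the pairs
`(i, k)` into `k < i` and `i ≤ k` gives `C(n,2) = inv(A) + ∑_{i,l} (∑_{j<l} a_ij) (∑_{k≥i} a_kl)`.
For a square sign matrix both factors are nonnegative (partial row sums are `≥ 0`, partial column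
sums are `≤ 1`), which gives the bound. In the equality case every product vanishes. Going down
the rows, if the rows above `i` are antidiagonal, the column sums above row `i` force `a_ij ≥ 0`
up to the antidiagonal column `r = n - 1 - i` and `a_ij ≤ 0` after it, while the vanishing
product at `(i, r)` makes the entries before `r` sum to `0`; the row sum `1` then leaves only
`a_ir = 1`.
-/

open Finset

variable {n : ℕ}

lemma sum_sum_ite_lt_eq_choose_two (n : ℕ) :
    ∑ j : Fin n, ∑ l : Fin n, (if j < l then (1 : ℤ) else 0) = n.choose 2 := by
  rw [sum_comm]
  simp only [sum_boole, filter_gt_eq_Iio, Fin.card_Iio]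
  rw [Fin.sum_univ_eq_sum_range (fun i => ((i : ℕ) : ℤ)), ← Nat.cast_sum, sum_range_id,
    Nat.choose_two_right]

lemma Fin.sum_Iio_add_sum_Ici {M : Type*} [AddCommMonoid M] (f : Fin n → M) (i : Fin n) :
    ∑ k ∈ Iio i, f k + ∑ k ∈ Ici i, f k = ∑ k, f k := by
  rw [← sum_union (disjoint_left.2 fun _ ha hb => (mem_Iio.1 ha).not_ge (mem_Ici.1 hb))]
  congr
  ext
  simp [lt_or_ge]

lemma Fin.Iio_eq_empty_or_Iic (l : Fin n) : Iio l = ∅ ∨ ∃ j, Iio l = Iic j := by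
  rcases (l : ℕ).eq_zero_or_pos with hl | hl
  · left
    ext x
    simp [Fin.lt_def, hl]
  · right
    refine ⟨⟨l - 1, by omega⟩, ?_⟩
    ext x
    simp only [mem_Iio, mem_Iic, Fin.lt_def, Fin.le_def]
    omega

lemma Fin.eq_ite_of_sum_eq_one {f : Fin n → ℤ} {r : Fin n}
    (hleft : ∀ j < r, 0 ≤ f j) (hright : ∀ j, r < j → f j ≤ 0)
    (hprefix : ∑ j ∈ Iio r, f j = 0) (hsum : ∑ j, f j = 1) (hr : f r ≤ 1) :
    f = fun j => if j = r then 1 else 0 := by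
  rw [← Fin.sum_Iio_add_sum_Ici, hprefix, zero_add, ← Ioi_insert,
    sum_insert (by simp)] at hsum
  have hsuffix_nonpos : ∑ j ∈ Ioi r, f j ≤ 0 := sum_nonpos fun j hj => hright j (mem_Ioi.1 hj)
  have hsuffix : ∑ j ∈ Ioi r, f j = 0 := by omega
  funext j
  rcases lt_trichotomy j r with hj | hj | hj
  · simpa [hj.ne] using (sum_eq_zero_iff_of_nonneg fun k hk => hleft k (mem_Iio.1 hk)).1
      hprefix j (mem_Iio.2 hj)
  · rw [if_pos hj, hj]
    omega
  · simpa [hj.ne'] using (sum_eq_zero_iff_of_nonpos fun k hk => hright k (mem_Ioi.1 hk)).1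
      hsuffix j (mem_Ioi.2 hj)

def invDefect (n : ℕ) (A : Fin n → Fin n → ℤ) : ℤ :=
  ∑ i, ∑ l, (∑ j ∈ Iio l, A i j) * ∑ k ∈ Ici i, A k l

lemma invDefect_eq_sum (A : Fin n → Fin n → ℤ) :
    invDefect n A = ∑ i, ∑ j, ∑ k, ∑ l, if i ≤ k ∧ j < l then A i j * A k l else 0 := by
  simp only [invDefect, sum_mul_sum, ← filter_gt_eq_Iio, ← filter_le_eq_Ici, sum_filter]
  refine sum_congr rfl fun i _ => ?_
  rw [sum_comm]
  refine sum_congr rfl fun j _ => ?_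
  rw [sum_comm]
  refine sum_congr rfl fun k _ => ?_
  refine sum_congr rfl fun l _ => ?_
  split_ifs <;> simp_all

lemma choose_two_eq_sum {A : Fin n → Fin n → ℤ} (hcol : ∀ j, ∑ i, A i j = 1) :
    (n.choose 2 : ℤ) = ∑ i, ∑ j, ∑ k, ∑ l, if j < l then A i j * A k l else 0 := by
  have hpair : ∀ j l : Fin n,
      (if j < l then (1 : ℤ) else 0) = ∑ i, ∑ k, if j < l then A i j * A k l else 0 := by
    intro j l
    split_ifs
    · rw [← sum_mul_sum, hcol, hcol, one_mul]
    · simp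
  rw [← sum_sum_ite_lt_eq_choose_two]
  simp only [hpair]
  refine (sum_congr rfl fun j _ => sum_comm).trans ?_
  rw [sum_comm]
  exact sum_congr rfl fun i _ => sum_congr rfl fun j _ => sum_comm

theorem invNum_add_invDefect {A : Fin n → Fin n → ℤ} (hcol : ∀ j, ∑ i, A i j = 1) :
    invNum n A + invDefect n A = n.choose 2 := by
  have hsplit : ∀ i j k l : Fin n, ((if k < i ∧ j < l then A i j * A k l else 0) +
      if i ≤ k ∧ j < l then A i j * A k l else 0) = if j < l then A i j * A k l else 0 := by
    intro i j k l
    by_cases hki : k < i <;> simp [hki, le_of_not_gt, not_le_of_gt]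
  simp only [invNum, invDefect_eq_sum, choose_two_eq_sum hcol, ← sum_add_distrib, hsplit]

def antidiagMatrix (n : ℕ) (i j : Fin n) : ℤ :=
  if j = i.rev then 1 else 0

lemma antidiagMatrix_eq_ite_add_eq (n : ℕ) :
    antidiagMatrix n = fun (i j : Fin n) => if (i : ℕ) + (j : ℕ) = n - 1 then (1 : ℤ) else 0 := by
  funext i j
  simp only [antidiagMatrix, Fin.ext_iff, Fin.val_rev]
  omega

lemma antidiagMatrix_apply' (k l : Fin n) :
    antidiagMatrix n k l = if k = l.rev then 1 else 0 := by
  simp only [antidiagMatrix, eq_comm (a := l), Fin.rev_eq_iff]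

lemma sum_Iio_antidiagMatrix_col (i l : Fin n) :
    ∑ k ∈ Iio i, antidiagMatrix n k l = if l.rev < i then 1 else 0 := by
  simp only [antidiagMatrix_apply', sum_ite_eq', mem_Iio]

lemma sum_Ici_antidiagMatrix_col (i l : Fin n) :
    ∑ k ∈ Ici i, antidiagMatrix n k l = if i ≤ l.rev then 1 else 0 := by
  simp only [antidiagMatrix_apply', sum_ite_eq', mem_Ici]

lemma sum_Iio_antidiagMatrix_row (i l : Fin n) :
    ∑ j ∈ Iio l, antidiagMatrix n i j = if i.rev < l then 1 else 0 := by
  simp only [antidiagMatrix, sum_ite_eq', mem_Iio]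

lemma sum_Iio_antidiagMatrix_row_mul_sum_Ici_col (i l : Fin n) :
    (∑ j ∈ Iio l, antidiagMatrix n i j) * ∑ k ∈ Ici i, antidiagMatrix n k l = 0 := by
  have hdisjoint : ¬(i.rev < l ∧ i ≤ l.rev) := fun ⟨hl, hi⟩ => (Fin.rev_lt_iff.1 hl).not_ge hi
  rw [sum_Iio_antidiagMatrix_row, sum_Ici_antidiagMatrix_col, ite_zero_mul_ite_zero,
    if_neg hdisjoint]

namespace IsSquareSign

variable {A : Fin n → Fin n → ℤ}

lemma sum_Iio_row_nonneg (hA : IsSquareSign n A) (i l : Fin n) : 0 ≤ ∑ j ∈ Iio l, A i j := by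
  obtain h | ⟨j, h⟩ := Fin.Iio_eq_empty_or_Iic l
  · simp [h]
  · exact h ▸ hA.2.2.2.2 i j

lemma sum_Iio_col_le_one (hA : IsSquareSign n A) (i l : Fin n) : ∑ k ∈ Iio i, A k l ≤ 1 := by
  obtain h | ⟨k, h⟩ := Fin.Iio_eq_empty_or_Iic i
  · simp [h]
  · exact h ▸ (hA.2.2.2.1 k l).2

lemma sum_Ici_col_nonneg (hA : IsSquareSign n A) (i l : Fin n) : 0 ≤ ∑ k ∈ Ici i, A k l := by
  have hsplit := Fin.sum_Iio_add_sum_Ici (A · l) i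
  have := hA.sum_Iio_col_le_one i l
  rw [hA.2.1 l] at hsplit
  omega

lemma sum_Iio_row_mul_sum_Ici_col_nonneg (hA : IsSquareSign n A) (i l : Fin n) :
    0 ≤ (∑ j ∈ Iio l, A i j) * ∑ k ∈ Ici i, A k l :=
  mul_nonneg (hA.sum_Iio_row_nonneg i l) (hA.sum_Ici_col_nonneg i l)

lemma invDefect_nonneg (hA : IsSquareSign n A) : 0 ≤ invDefect n A :=
  sum_nonneg fun i _ => sum_nonneg fun l _ => hA.sum_Iio_row_mul_sum_Ici_col_nonneg i l

lemma invNum_le_choose_two (hA : IsSquareSign n A) : invNum n A ≤ n.choose 2 := by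
  have := invNum_add_invDefect hA.2.1
  have := hA.invDefect_nonneg
  omega

lemma invNum_eq_choose_two_iff (hA : IsSquareSign n A) : invNum n A = n.choose 2 ↔
    ∀ i l, (∑ j ∈ Iio l, A i j) * ∑ k ∈ Ici i, A k l = 0 := by
  have hid := invNum_add_invDefect hA.2.1
  have hiff : invNum n A = n.choose 2 ↔ invDefect n A = 0 := by omega
  rw [hiff, invDefect, sum_eq_zero_iff_of_nonneg fun i _ =>
    sum_nonneg fun l _ => hA.sum_Iio_row_mul_sum_Ici_col_nonneg i l]
  simp only [mem_univ, forall_const,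
    sum_eq_zero_iff_of_nonneg fun l _ => hA.sum_Iio_row_mul_sum_Ici_col_nonneg _ l]

lemma row_eq_antidiagMatrix (hA : IsSquareSign n A)
    (hzero : ∀ i l, (∑ j ∈ Iio l, A i j) * ∑ k ∈ Ici i, A k l = 0)
    (i : Fin n) (habove : ∀ k < i, A k = antidiagMatrix n k) : A i = antidiagMatrix n i := by
  have hcol_above : ∀ l, ∑ k ∈ Iio i, A k l = if l.rev < i then 1 else 0 := fun l => by
    rw [← sum_Iio_antidiagMatrix_col]
    exact sum_congr rfl fun k hk => by rw [habove k (mem_Iio.1 hk)]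
  have hcol_through : ∀ l, ∑ k ∈ Iic i, A k l = (if l.rev < i then 1 else 0) + A i l := fun l => by
    rw [← Iio_insert, sum_insert (by simp), hcol_above, add_comm]
  refine Fin.eq_ite_of_sum_eq_one (fun j hj => ?_) (fun j hj => ?_) ?_ (hA.2.2.1 i) ?_
  · have := (hA.2.2.2.1 i j).1
    rw [hcol_through, if_neg (Fin.lt_rev_iff.2 hj).not_gt] at this
    omega
  · have := (hA.2.2.2.1 i j).2
    rw [hcol_through, if_pos (Fin.rev_lt_iff.1 hj)] at this
    omega
  · have hsuffix : ∑ k ∈ Ici i, A k i.rev = 1 := by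
      have := Fin.sum_Iio_add_sum_Ici (A · i.rev) i
      rw [hA.2.1, hcol_above, Fin.rev_rev, if_neg (lt_irrefl i)] at this
      omega
    simpa [hsuffix] using hzero i i.rev
  · rcases hA.1 i i.rev with h | h | h <;> omega

lemma eq_antidiagMatrix (hA : IsSquareSign n A)
    (hzero : ∀ i l, (∑ j ∈ Iio l, A i j) * ∑ k ∈ Ici i, A k l = 0) :
    A = antidiagMatrix n := by
  funext i
  induction i using WellFoundedLT.induction with
  | _ i ih => exact hA.row_eq_antidiagMatrix hzero i ih

end IsSquareSign

theorem invNum_le_and_eq_iff_antidiagonal_general (n : ℕ) :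
    (∀ A : Fin n → Fin n → ℤ, IsSquareSign n A → invNum n A ≤ (n.choose 2 : ℤ)) ∧
    (∀ A : Fin n → Fin n → ℤ, IsSquareSign n A →
      (invNum n A = (n.choose 2 : ℤ) ↔
        A = fun (i j : Fin n) => if (i : ℕ) + (j : ℕ) = n - 1 then (1 : ℤ) else 0)) := by
  refine ⟨fun A hA => hA.invNum_le_choose_two, fun A hA => ?_⟩
  rw [← antidiagMatrix_eq_ite_add_eq, hA.invNum_eq_choose_two_iff]
  refine ⟨hA.eq_antidiagMatrix, ?_⟩
  rintro rfl
  exact sum_Iio_antidiagMatrix_row_mul_sum_Ici_col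

/-- Every `n × n` square sign matrix has inversion number at most `C(n,2)`, and
the unique square sign matrix attaining this bound is the antidiagonal
permutation matrix. -/
theorem invNum_le_and_eq_iff_antidiagonal (n : ℕ) (hn : 0 < n) :
    (∀ A : Fin n → Fin n → ℤ, IsSquareSign n A → invNum n A ≤ (n.choose 2 : ℤ)) ∧
    (∀ A : Fin n → Fin n → ℤ, IsSquareSign n A →
      (invNum n A = (n.choose 2 : ℤ) ↔
        A = fun (i j : Fin n) => if (i : ℕ) + (j : ℕ) = n - 1 then (1 : ℤ) else 0)) :=
  invNum_le_and_eq_iff_antidiagonal_general n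
end

section
/- For every n ≥ 2, the number of n×n magog matrices with positive inversion number equal to C(n,2) − 1 = n(n−1)/2 − 1 is exactly n − 1. -/
/-- The number of entries of `A` equal to `-1`. -/
def negCount (n : ℕ) (A : Fin n → Fin n → ℤ) : ℕ :=
  (Finset.univ.filter (fun p : Fin n × Fin n => A p.1 p.2 = -1)).card

/-- The positive inversion number `posinv(A) = inv(A) - N(A)`, where `N(A)` is
the number of `-1` entries of `A`. -/
def posInvNum (n : ℕ) (A : Fin n → Fin n → ℤ) : ℤ :=
  invNum n A - (negCount n A : ℤ)

/-!
Write `r(i, l)` for the sum of row `i` strictly left of column `l` and `c(i, l)` for the sum of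
column `l` strictly above row `i`. Then `inv(A) = ∑ r(i, l) c(i, l)`, while `∑ r(i, l) = C(n, 2)`
because every column sums to `1`. Hence `C(n, 2) - posinv(A) = D(A) + N(A)` with
`D(A) = ∑ r(i, l) (1 - c(i, l))`, and every term of `D(A)` is nonnegative since `r ≥ 0` and
`c ≤ 1`. So `posinv(A) = C(n, 2) - 1` leaves two cases. If `N(A) = 1` and `D(A) = 0`, every `1`
with a positive row sum to its left must have a `1` above it in its column, and chasing the `1`s
around the unique `-1` produces two `1`s in one column, which is impossible. If `N(A) = 0` and
`D(A) = 1`, then `A` is a permutation matrix and `D(A)` counts the non-inversions of its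
permutation; a single non-inversion must be an adjacent pair, so the permutation is the reversal
composed with one of the `n - 1` adjacent transpositions, and all of these give magog matrices.
-/

open Finset

theorem Finset.sum_Iio_eq_zero_or_exists_eq_sum_Iic {α M : Type*} [LinearOrder α]
    [LocallyFiniteOrderBot α] [PredOrder α] [AddCommMonoid M] (f : α → M) (l : α) :
    ∑ x ∈ Iio l, f x = 0 ∨ ∃ m, ∑ x ∈ Iio l, f x = ∑ x ∈ Iic m, f x := by
  by_cases hl : IsMin l
  · simp [hl]
  · exact .inr ⟨Order.pred l, by rw [Iic_pred_eq_Iio_of_not_isMin hl]⟩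

theorem Finset.exists_eq_one_of_sum_pos {ι : Type*} {s : Finset ι} {f : ι → ℤ}
    (hf : ∀ x, f x = -1 ∨ f x = 0 ∨ f x = 1) (h : 0 < ∑ x ∈ s, f x) : ∃ x ∈ s, f x = 1 := by
  obtain ⟨x, hx, hpos⟩ := exists_lt_of_sum_lt (f := 0) (g := f) (s := s) (by simpa using h)
  exact ⟨x, hx, by rcases hf x with h | h | h <;> simp_all⟩

theorem Fintype.eq_of_apply_eq_one_of_sum_eq_one {ι : Type*} [Fintype ι] {f : ι → ℤ}
    (hf : ∀ x, 0 ≤ f x) (hsum : ∑ x, f x = 1) {a b : ι} (ha : f a = 1) (hb : f b = 1) :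
    a = b := by
  classical
  by_contra hne
  have h2 : f a + f b ≤ ∑ x, f x := sum_pair (f := f) hne ▸ sum_le_univ_sum_of_nonneg hf
  omega

theorem Fin.eq_rev_of_strictAnti {n : ℕ} {s : Fin n → Fin n} (hs : StrictAnti s) :
    s = Fin.rev := by
  funext j
  exact Fin.rev_eq_iff.1 (congrFun (Fin.rev_strictAnti.comp hs).eq_id j)

namespace SquareSign

variable {n : ℕ}

def rowPrefix (A : Fin n → Fin n → ℤ) (i l : Fin n) : ℤ := ∑ j ∈ Iio l, A i j

def colPrefix (A : Fin n → Fin n → ℤ) (i l : Fin n) : ℤ := ∑ k ∈ Iio i, A k l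

def deficit (A : Fin n → Fin n → ℤ) : ℤ :=
  ∑ i, ∑ l, rowPrefix A i l * (1 - colPrefix A i l)

theorem invNum_eq_sum_rowPrefix_mul_colPrefix (A : Fin n → Fin n → ℤ) :
    invNum n A = ∑ i, ∑ l, rowPrefix A i l * colPrefix A i l := by
  unfold invNum rowPrefix colPrefix
  refine sum_congr rfl fun i _ => ?_
  simp only [sum_mul_sum, ← filter_gt_eq_Iio, sum_filter]
  rw [sum_congr rfl fun j _ => sum_comm, sum_comm]
  refine sum_congr rfl fun l _ => sum_congr rfl fun j _ => ?_
  split_ifs with hjl <;> simp [hjl]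

variable {A : Fin n → Fin n → ℤ}

theorem sum_rowPrefix (hcol : ∀ j, ∑ i, A i j = 1) :
    ∑ i, ∑ l, rowPrefix A i l = n.choose 2 := by
  unfold rowPrefix
  rw [sum_comm]
  simp_rw [sum_comm (s := univ) (t := Iio _), hcol]
  simp [Fin.sum_univ_eq_sum_range, Nat.choose_two_right, ← sum_range_id]

theorem posInvNum_eq_choose_two_sub (hcol : ∀ j, ∑ i, A i j = 1) :
    posInvNum n A = n.choose 2 - (deficit A + negCount n A) := by
  rw [posInvNum, invNum_eq_sum_rowPrefix_mul_colPrefix, ← sum_rowPrefix hcol, deficit]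
  simp only [mul_sub, mul_one, sum_sub_distrib]
  ring

theorem rowPrefix_add (i l : Fin n) : rowPrefix A i l + A i l = ∑ j ∈ Iic l, A i j := by
  rw [rowPrefix, Iic_eq_cons_Iio, sum_cons, add_comm]

theorem colPrefix_add (i l : Fin n) : colPrefix A i l + A i l = ∑ k ∈ Iic i, A k l := by
  rw [colPrefix, Iic_eq_cons_Iio, sum_cons, add_comm]

theorem rowPrefix_nonneg (hA : IsSquareSign n A) (i l : Fin n) : 0 ≤ rowPrefix A i l := by
  rcases sum_Iio_eq_zero_or_exists_eq_sum_Iic (A i) l with h | ⟨m, h⟩ <;> rw [rowPrefix, h]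
  exact hA.2.2.2.2 i m

theorem colPrefix_nonneg (hA : IsSquareSign n A) (i l : Fin n) : 0 ≤ colPrefix A i l := by
  rcases sum_Iio_eq_zero_or_exists_eq_sum_Iic (A · l) i with h | ⟨m, h⟩ <;> rw [colPrefix, h]
  exact (hA.2.2.2.1 m l).1

theorem colPrefix_le_one (hA : IsSquareSign n A) (i l : Fin n) : colPrefix A i l ≤ 1 := by
  rcases sum_Iio_eq_zero_or_exists_eq_sum_Iic (A · l) i with h | ⟨m, h⟩ <;> rw [colPrefix, h]
  exacts [zero_le_one, (hA.2.2.2.1 m l).2]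

theorem rowPrefix_mul_one_sub_colPrefix_nonneg (hA : IsSquareSign n A) (i l : Fin n) :
    0 ≤ rowPrefix A i l * (1 - colPrefix A i l) :=
  mul_nonneg (rowPrefix_nonneg hA i l) (sub_nonneg.2 (colPrefix_le_one hA i l))

theorem deficit_nonneg (hA : IsSquareSign n A) : 0 ≤ deficit A :=
  sum_nonneg fun i _ => sum_nonneg fun l _ => rowPrefix_mul_one_sub_colPrefix_nonneg hA i l

theorem colPrefix_eq_one_of_deficit_eq_zero (hA : IsSquareSign n A) (h0 : deficit A = 0)
    {i l : Fin n} (hpos : 0 < rowPrefix A i l) : colPrefix A i l = 1 := by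
  have hnn := rowPrefix_mul_one_sub_colPrefix_nonneg hA
  have hrow := (sum_eq_zero_iff_of_nonneg fun i _ => sum_nonneg fun l _ => hnn i l).1 h0 i
    (mem_univ i)
  have hterm := (sum_eq_zero_iff_of_nonneg fun l _ => hnn i l).1 hrow l (mem_univ l)
  rcases mul_eq_zero.1 hterm with h | h <;> linarith

theorem colPrefix_eq_zero_of_eq_one (hA : IsSquareSign n A) {i l : Fin n} (h1 : A i l = 1) :
    colPrefix A i l = 0 := by
  have := colPrefix_add (A := A) i l
  have := colPrefix_nonneg hA i l
  have := (hA.2.2.2.1 i l).2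
  omega

theorem rowPrefix_eq_zero_of_deficit_eq_zero (hA : IsSquareSign n A) (h0 : deficit A = 0)
    {i l : Fin n} (h1 : A i l = 1) : rowPrefix A i l = 0 := by
  by_contra hne
  have := colPrefix_eq_one_of_deficit_eq_zero hA h0
    (lt_of_le_of_ne (rowPrefix_nonneg hA i l) (Ne.symm hne))
  simp_all [colPrefix_eq_zero_of_eq_one hA h1]

theorem nonneg_of_ne_neg_one (hA : IsSquareSign n A) {i j : Fin n} (h : A i j ≠ -1) :
    0 ≤ A i j := by
  rcases hA.1 i j with h' | h' | h' <;> simp_all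

theorem nonneg_of_negCount_eq_zero (hA : IsSquareSign n A) (hN : negCount n A = 0)
    (i j : Fin n) : 0 ≤ A i j := by
  refine nonneg_of_ne_neg_one hA fun h => ?_
  have : (i, j) ∈ ({p | A p.1 p.2 = -1} : Finset (Fin n × Fin n)) := by simpa using h
  rw [negCount, card_eq_zero] at hN
  simp [hN] at this

theorem exists_nonneg_off_of_negCount_eq_one (hA : IsSquareSign n A) (hN : negCount n A = 1) :
    ∃ q l₀, A q l₀ = -1 ∧ ∀ i j, (i, j) ≠ (q, l₀) → 0 ≤ A i j := by
  obtain ⟨⟨q, l₀⟩, hq⟩ := card_eq_one.1 hN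
  have hmem (i j : Fin n) : A i j = -1 ↔ (i, j) = (q, l₀) := by
    simpa using congrArg ((i, j) ∈ ·) hq
  exact ⟨q, l₀, (hmem q l₀).2 rfl, fun i j hij => nonneg_of_ne_neg_one hA (mt (hmem i j).1 hij)⟩

theorem deficit_ne_zero_of_negCount_eq_one (hA : IsSquareSign n A) (hN : negCount n A = 1) :
    deficit A ≠ 0 := by
  intro h0
  obtain ⟨q, l₀, hneg, hnn⟩ := exists_nonneg_off_of_negCount_eq_one hA hN
  obtain ⟨j₁, hj₁, hAj₁⟩ : ∃ j ∈ Iio l₀, A q j = 1 := by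
    refine exists_eq_one_of_sum_pos (hA.1 q) ?_
    have := rowPrefix_add (A := A) q l₀
    have := hA.2.2.2.2 q l₀
    rw [rowPrefix] at *
    omega
  obtain ⟨j₂, hj₂, hAj₂⟩ : ∃ j ∈ (univ.erase l₀).erase j₁, A q j = 1 := by
    refine exists_eq_one_of_sum_pos (hA.1 q) ?_
    rw [sum_erase_eq_sub (mem_erase.2 ⟨(mem_Iio.1 hj₁).ne, mem_univ _⟩),
      sum_erase_eq_sub (mem_univ _), hA.2.2.1 q]
    omega
  rcases lt_or_gt_of_ne (ne_of_mem_erase (mem_of_mem_erase hj₂)) with hlt | hgt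
  · -- the right one of the two `1`s of row `q` left of `l₀` has a positive row prefix
    have two_ones (a b : Fin n) (hab : a < b) (hb : b < l₀) (ha1 : A q a = 1)
        (hb1 : A q b = 1) : False := by
      have := rowPrefix_eq_zero_of_deficit_eq_zero hA h0 hb1
      have : A q a ≤ rowPrefix A q b :=
        single_le_sum (fun j hj => hnn q j (by simpa using ((mem_Iio.1 hj).trans hb).ne))
          (mem_Iio.2 hab)
      omega
    rcases lt_or_gt_of_ne (ne_of_mem_erase hj₂) with h | h
    exacts [two_ones _ _ h (mem_Iio.1 hj₁) hAj₂ hAj₁, two_ones _ _ h hlt hAj₁ hAj₂]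
  · -- the `1` above the `-1` in column `l₀` forces a `1` above row `q` in column `j₂`
    obtain ⟨p, hp, hAp⟩ : ∃ k ∈ Iio q, A k l₀ = 1 := by
      refine exists_eq_one_of_sum_pos (hA.1 · l₀) ?_
      have := colPrefix_add (A := A) q l₀
      have := (hA.2.2.2.1 q l₀).1
      rw [colPrefix] at *
      omega
    have hpq : p ≠ q := (mem_Iio.1 hp).ne
    have hrow : A p l₀ ≤ rowPrefix A p j₂ :=
      single_le_sum (fun j _ => hnn p j (by simp [hpq])) (mem_Iio.2 hgt)
    have hcol : colPrefix A p j₂ ≤ colPrefix A q j₂ :=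
      sum_le_sum_of_subset_of_nonneg (Iio_subset_Iio (mem_Iio.1 hp).le)
        fun k _ _ => hnn k j₂ (by simp [hgt.ne'])
    have := colPrefix_eq_one_of_deficit_eq_zero hA h0 (i := p) (l := j₂) (by omega)
    have := colPrefix_eq_zero_of_eq_one hA hAj₂
    omega

def nonInversions (t : Fin n → Fin n) : Finset (Fin n × Fin n) :=
  {p | p.1 < p.2 ∧ t p.1 ≤ t p.2}

@[simp]
theorem mem_nonInversions {t : Fin n → Fin n} {j l : Fin n} :
    (j, l) ∈ nonInversions t ↔ j < l ∧ t j ≤ t l := by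
  simp [nonInversions]

variable {m : ℕ}

def revSwap (k : Fin m) : Fin (m + 1) → Fin (m + 1) :=
  fun j => (Equiv.swap k.castSucc k.succ j).rev

theorem revSwap_bijective (k : Fin m) : (revSwap k).Bijective :=
  Fin.rev_bijective.comp (Equiv.bijective _)

theorem swap_lt_swap_of_ne (k : Fin m) {a b : Fin (m + 1)} (hab : a < b)
    (hne : (a, b) ≠ (k.castSucc, k.succ)) :
    Equiv.swap k.castSucc k.succ a < Equiv.swap k.castSucc k.succ b := by
  simp only [Equiv.swap_apply_def, ne_eq, Prod.mk.injEq, Fin.ext_iff, Fin.lt_def,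
    Fin.val_castSucc, Fin.val_succ] at hab hne ⊢
  split_ifs <;> (try simp only [Fin.val_castSucc, Fin.val_succ] at *) <;> omega

theorem nonInversions_revSwap (k : Fin m) :
    nonInversions (revSwap k) = {(k.castSucc, k.succ)} := by
  ext ⟨a, b⟩
  simp only [mem_nonInversions, revSwap, Fin.rev_le_rev, mem_singleton]
  constructor
  · rintro ⟨hab, hle⟩
    by_contra hne
    exact (swap_lt_swap_of_ne k hab hne).not_ge hle
  · rintro h
    simp_all [Fin.castSucc_lt_succ.le]

theorem revSwap_injective : (revSwap (m := m)).Injective := by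
  intro a b h
  simpa [nonInversions_revSwap] using congrArg nonInversions h

theorem revSwap_succ_le (k : Fin m) (j j' : Fin (m + 1)) (h : (j' : ℕ) = j + 1) :
    (revSwap k j' : ℕ) ≤ revSwap k j + 1 := by
  simp only [revSwap, Fin.val_rev, Equiv.swap_apply_def]
  split_ifs <;> (try simp only [Fin.ext_iff, Fin.val_castSucc, Fin.val_succ] at *) <;> omega

theorem exists_nonInversions_eq_singleton {t : Fin (m + 1) → Fin (m + 1)}
    (h : #(nonInversions t) = 1) : ∃ k : Fin m, nonInversions t = {(k.castSucc, k.succ)} := by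
  obtain ⟨⟨a, b⟩, hab⟩ := card_eq_one.1 h
  have hmem (j l : Fin (m + 1)) : (j < l ∧ t j ≤ t l) ↔ (j, l) = (a, b) := by
    simpa using congrArg ((j, l) ∈ ·) hab
  obtain ⟨hlt, hle⟩ := (hmem a b).2 rfl
  -- a column `c` strictly between `a` and `b` would give `t b < t c < t a`
  have hadj : (b : ℕ) = a + 1 := by
    by_contra hne
    have hlt' := Fin.lt_def.1 hlt
    set c : Fin (m + 1) := ⟨a + 1, by omega⟩
    have hac : t c < t a := not_le.1 fun hle' => by
      have := congrArg (Fin.val ∘ Prod.snd) ((hmem a c).1 ⟨Fin.lt_def.2 (by simp [c]), hle'⟩)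
      simp [c] at this
      omega
    have hcb : t b < t c := not_le.1 fun hle' => by
      have := congrArg (Fin.val ∘ Prod.fst)
        ((hmem c b).1 ⟨Fin.lt_def.2 (by simp [c]; omega), hle'⟩)
      simp [c] at this
    exact (hcb.trans hac).not_ge hle
  refine ⟨⟨a, by omega⟩, ?_⟩
  rw [hab]
  congr
  ext
  simp [hadj]

theorem eq_revSwap_of_nonInversions_eq_singleton {t : Fin (m + 1) → Fin (m + 1)}
    (ht : t.Injective) {k : Fin m} (h : nonInversions t = {(k.castSucc, k.succ)}) :
    t = revSwap k := by
  set σ := Equiv.swap k.castSucc k.succ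
  have hmem (j l : Fin (m + 1)) : (j < l ∧ t j ≤ t l) ↔ (j, l) = (k.castSucc, k.succ) := by
    simpa using congrArg ((j, l) ∈ ·) h
  have hanti : StrictAnti (t ∘ σ) := by
    intro x y hxy
    by_cases hxy' : (x, y) = (k.castSucc, k.succ)
    · obtain ⟨rfl, rfl⟩ := Prod.mk.inj hxy'
      simp only [Function.comp_apply, σ, Equiv.swap_apply_left, Equiv.swap_apply_right]
      exact lt_of_le_of_ne ((hmem _ _).2 rfl).2 (ht.ne (Fin.castSucc_lt_succ (i := k)).ne)
    · refine not_le.1 fun hle => ?_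
      have := (hmem _ _).1 ⟨swap_lt_swap_of_ne k hxy hxy', hle⟩
      simp only [Prod.mk.injEq, Equiv.swap_apply_eq_iff, Equiv.swap_apply_left,
        Equiv.swap_apply_right] at this
      obtain ⟨rfl, rfl⟩ := this
      exact (Fin.castSucc_lt_succ (i := k)).not_gt hxy
  funext j
  simpa [revSwap, σ] using congrFun (Fin.eq_rev_of_strictAnti hanti) (σ j)

def permMatrix (t : Fin n → Fin n) : Fin n → Fin n → ℤ := fun i j => if i = t j then 1 else 0

theorem permMatrix_injective : (permMatrix (n := n)).Injective := by
  intro t s h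
  funext j
  simpa [permMatrix] using congrFun (congrFun h (t j)) j

variable {t : Fin n → Fin n}

theorem sum_Iic_permMatrix (i l : Fin n) :
    ∑ k ∈ Iic i, permMatrix t k l = if t l ≤ i then 1 else 0 := by
  simp [permMatrix]

theorem colPrefix_permMatrix (i l : Fin n) :
    colPrefix (permMatrix t) i l = if t l < i then 1 else 0 := by
  simp [colPrefix, permMatrix]

theorem negCount_permMatrix : negCount n (permMatrix t) = 0 := by
  rw [negCount, card_eq_zero, filter_eq_empty_iff]
  intro p _
  simp only [permMatrix]
  split_ifs <;> simp

theorem isSquareSign_permMatrix (ht : t.Bijective) : IsSquareSign n (permMatrix t) := by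
  refine ⟨fun i j => by simp only [permMatrix]; split_ifs <;> simp, fun j => by simp [permMatrix],
    fun i => ?_, fun i j => ?_, fun i j => sum_nonneg fun j _ => ?_⟩
  · simpa [permMatrix, eq_comm] using ht.sum_comp (fun k => if k = i then (1 : ℤ) else 0)
  · rw [sum_Iic_permMatrix]; split_ifs <;> simp
  · simp only [permMatrix]; split_ifs <;> simp

theorem isMagog_permMatrix (ht : t.Bijective)
    (hstep : ∀ j j' : Fin n, (j' : ℕ) = j + 1 → (t j' : ℕ) ≤ t j + 1) :
    IsMagog n (permMatrix t) := by
  refine ⟨isSquareSign_permMatrix ht, fun i j hi hj => ?_⟩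
  have hrow : 0 ≤ ∑ j' ∈ Iic (⟨j, by omega⟩ : Fin n), permMatrix t ⟨i + 1, by omega⟩ j' :=
    sum_nonneg fun j _ => by simp only [permMatrix]; split_ifs <;> simp
  have := hstep ⟨j, by omega⟩ ⟨j + 1, by omega⟩ rfl
  simp only [sum_Iic_permMatrix, Fin.le_def] at hrow ⊢
  split_ifs <;> omega

theorem deficit_permMatrix : deficit (permMatrix t) = #(nonInversions t) := by
  rw [deficit, nonInversions, card_filter]
  push_cast
  rw [Fintype.sum_prod_type]
  conv_lhs => rw [sum_comm]
  conv_rhs => rw [sum_comm]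
  refine sum_congr rfl fun l _ => ?_
  simp only [rowPrefix, colPrefix_permMatrix, sum_mul, permMatrix, ite_mul, one_mul, zero_mul]
  rw [sum_comm, ← filter_gt_eq_Iio, sum_filter]
  refine sum_congr rfl fun j _ => ?_
  simp only [sum_ite_eq', mem_univ, if_true]
  split_ifs <;> simp_all [not_le.2]

theorem exists_eq_permMatrix (hA : IsSquareSign n A) (hnn : ∀ i j, 0 ≤ A i j) :
    ∃ t, t.Injective ∧ A = permMatrix t := by
  have hex (j : Fin n) : ∃ i, A i j = 1 := by
    obtain ⟨i, -, hi⟩ := exists_eq_one_of_sum_pos (s := univ) (hA.1 · j) (by simp [hA.2.1 j])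
    exact ⟨i, hi⟩
  choose t ht using hex
  refine ⟨t, fun a b hab => Fintype.eq_of_apply_eq_one_of_sum_eq_one (hnn (t a)) (hA.2.2.1 _)
    (ht a) (hab ▸ ht b), funext fun i => funext fun j => ?_⟩
  by_cases h : i = t j
  · simp [permMatrix, h, ht]
  · rcases hA.1 i j with h' | h' | h'
    · linarith [hnn i j]
    · simp [permMatrix, h, h']
    · exact absurd (Fintype.eq_of_apply_eq_one_of_sum_eq_one (hnn · j) (hA.2.1 j) h' (ht j)) h

theorem isMagog_and_posInvNum_iff (A : Fin (m + 1) → Fin (m + 1) → ℤ) :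
    IsMagog (m + 1) A ∧ posInvNum (m + 1) A = ((m + 1).choose 2 : ℤ) - 1 ↔
      ∃ k : Fin m, permMatrix (revSwap k) = A := by
  constructor
  · rintro ⟨⟨hA, -⟩, hpos⟩
    rw [posInvNum_eq_choose_two_sub hA.2.1] at hpos
    have := deficit_nonneg hA
    obtain hN | hN : negCount (m + 1) A = 0 ∨ negCount (m + 1) A = 1 := by omega
    · obtain ⟨t, ht, rfl⟩ := exists_eq_permMatrix hA (nonneg_of_negCount_eq_zero hA hN)
      rw [deficit_permMatrix, hN] at hpos
      obtain ⟨k, hk⟩ := exists_nonInversions_eq_singleton (t := t) (by omega)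
      exact ⟨k, by rw [eq_revSwap_of_nonInversions_eq_singleton ht hk]⟩
    · exact absurd (by omega) (deficit_ne_zero_of_negCount_eq_one hA hN)
  · rintro ⟨k, rfl⟩
    refine ⟨isMagog_permMatrix (revSwap_bijective k) (revSwap_succ_le k), ?_⟩
    rw [posInvNum_eq_choose_two_sub (isSquareSign_permMatrix (revSwap_bijective k)).2.1,
      deficit_permMatrix, nonInversions_revSwap, negCount_permMatrix]
    simp

end SquareSign

open SquareSign in
theorem card_magog_posinv_choose_sub_one_general (n : ℕ) :
    Nat.card {A : Fin n → Fin n → ℤ //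
        IsMagog n A ∧ posInvNum n A = (n.choose 2 : ℤ) - 1} = n - 1 := by
  cases n with
  | zero => simp [posInvNum, invNum, negCount]
  | succ m =>
    have hrange : {A | IsMagog (m + 1) A ∧ posInvNum (m + 1) A = ((m + 1).choose 2 : ℤ) - 1} =
        Set.range (permMatrix ∘ revSwap) := by
      ext A
      simp [isMagog_and_posInvNum_iff]
    rw [← Set.coe_ofPred, hrange,
      Nat.card_range_of_injective (permMatrix_injective.comp revSwap_injective)]
    simp

/-- For `n ≥ 2`, there are exactly `n - 1` magog matrices with positive
inversion number `C(n,2) - 1`. -/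
theorem card_magog_posinv_choose_sub_one (n : ℕ) (hn : 2 ≤ n) :
    Nat.card {A : Fin n → Fin n → ℤ //
        IsMagog n A ∧ posInvNum n A = (n.choose 2 : ℤ) - 1} = n - 1 :=
  card_magog_posinv_choose_sub_one_general n
end

section
/- Let n ≥ 1 and let TSSCPP(n) ⊆ ℝ^(n×n) be the convex hull of the set of n×n magog matrices (viewed as real matrices). Then the set of extreme points (vertices) of TSSCPP(n) is exactly the set of n×n magog matrices; in particular every n×n magog matrix is an extreme point of TSSCPP(n). -/
/-- The set of `n × n` magog matrices regarded as real matrices. -/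
def magogReal (n : ℕ) : Set (Fin n → Fin n → ℝ) :=
  {A | ∃ M : Fin n → Fin n → ℤ, IsMagog n M ∧ A = fun i j => (M i j : ℝ)}

/-!
Taking partial column sums `X ↦ (∑_{i' ≤ i} X i' j)_{i,j}` is an injective linear map. It sends
every magog matrix to a `0/1`-matrix, because partial column sums of a square sign matrix lie in
`{0, 1}`; hence it maps `TSSCPP(n)` into the unit cube, and each magog matrix to a vertex of the
cube. Extreme points pull back along injective linear maps.
-/

open Set

section ExtremePoints

variable {𝕜 E F : Type*} [Semiring 𝕜] [PartialOrder 𝕜]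
  [AddCommMonoid E] [Module 𝕜 E] [AddCommMonoid F] [Module 𝕜 F]

lemma LinearMap.mem_extremePoints_of_injective {f : E →ₗ[𝕜] F} (hf : Function.Injective f)
    {s : Set E} {t : Set F} (hst : MapsTo f s t) {x : E} (hx : x ∈ s)
    (hfx : f x ∈ extremePoints 𝕜 t) : x ∈ extremePoints 𝕜 s := by
  refine ⟨hx, fun y hy z hz ⟨a, b, ha, hb, hab, hxyz⟩ ↦ hf ?_⟩
  exact hfx.2 (hst hy) (hst hz) ⟨a, b, ha, hb, hab, by rw [← hxyz, map_add, map_smul, map_smul]⟩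

end ExtremePoints

section PartialColSum

variable {ι κ R : Type*} [LinearOrder ι] [LocallyFiniteOrderBot ι] [CommRing R]

def partialColSum : (ι → κ → R) →ₗ[R] (ι → κ → R) where
  toFun X i j := ∑ i' ∈ Finset.Iic i, X i' j
  map_add' X Y := by ext; simp [Finset.sum_add_distrib]
  map_smul' c X := by ext; simp [Finset.mul_sum]

lemma partialColSum_apply (X : ι → κ → R) (i : ι) (j : κ) :
    partialColSum X i j = ∑ i' ∈ Finset.Iic i, X i' j := rfl

lemma partialColSum_injective [WellFoundedLT ι] :
    Function.Injective (partialColSum : (ι → κ → R) →ₗ[R] (ι → κ → R)) := by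
  intro X Y hXY
  funext i j
  induction i using WellFoundedLT.induction with
  | _ i ih =>
    have hsum := congrFun (congrFun hXY i) j
    have hlt : ∑ i' ∈ Finset.Iio i, X i' j = ∑ i' ∈ Finset.Iio i, Y i' j :=
      Finset.sum_congr rfl fun k hk ↦ ih k (Finset.mem_Iio.mp hk)
    rw [partialColSum_apply, partialColSum_apply, ← Finset.Iio_insert,
      Finset.sum_insert Finset.notMem_Iio_self, Finset.sum_insert Finset.notMem_Iio_self,
      hlt] at hsum
    exact add_right_cancel hsum

end PartialColSum

lemma IsSquareSign.partialColSum_mem_zero_one {n : ℕ} {M : Fin n → Fin n → ℤ}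
    (hM : IsSquareSign n M) (i j : Fin n) :
    partialColSum (fun i j ↦ (M i j : ℝ)) i j ∈ ({0, 1} : Set ℝ) := by
  obtain ⟨hnonneg, hle⟩ := hM.2.2.2.1 i j
  rw [partialColSum_apply, ← Int.cast_sum]
  rcases (by omega : ∑ i' ∈ Finset.Iic i, M i' j = 0 ∨ ∑ i' ∈ Finset.Iic i, M i' j = 1)
    with h | h <;> simp [h]

def unitCube (ι κ : Type*) : Set (ι → κ → ℝ) :=
  univ.pi fun _ ↦ univ.pi fun _ ↦ Icc 0 1

lemma extremePoints_unitCube (ι κ : Type*) :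
    extremePoints ℝ (unitCube ι κ) = univ.pi fun _ ↦ univ.pi fun _ ↦ {0, 1} := by
  simp only [unitCube, extremePoints_pi, extremePoints_Icc zero_le_one]

lemma mapsTo_partialColSum_convexHull_magogReal (n : ℕ) :
    MapsTo partialColSum (convexHull ℝ (magogReal n)) (unitCube (Fin n) (Fin n)) := by
  refine convexHull_min (t := partialColSum ⁻¹' unitCube (Fin n) (Fin n)) ?_
    ((convex_pi fun _ _ ↦ convex_pi fun _ _ ↦ convex_Icc 0 1).linear_preimage partialColSum)
  rintro _ ⟨M, hM, rfl⟩
  simp only [mem_preimage, unitCube, mem_univ_pi]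
  have h01 : ({0, 1} : Set ℝ) ⊆ Icc 0 1 := by rintro _ (rfl | rfl) <;> simp
  exact fun i j ↦ h01 (hM.1.partialColSum_mem_zero_one i j)

theorem extremePoints_tsscppPolytope_general (n : ℕ) :
    Set.extremePoints ℝ (convexHull ℝ (magogReal n)) = magogReal n := by
  refine extremePoints_convexHull_subset.antisymm ?_
  rintro _ ⟨M, hM, rfl⟩
  refine LinearMap.mem_extremePoints_of_injective partialColSum_injective
    (mapsTo_partialColSum_convexHull_magogReal n) (subset_convexHull ℝ _ ⟨M, hM, rfl⟩) ?_
  rw [extremePoints_unitCube]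
  exact fun i _ j _ ↦ hM.1.partialColSum_mem_zero_one i j

/-- The extreme points (vertices) of the magog matrix polytope `TSSCPP(n)`,
the convex hull of the `n × n` magog matrices, are exactly the magog
matrices. -/
theorem extremePoints_tsscppPolytope (n : ℕ) (hn : 0 < n) :
    Set.extremePoints ℝ (convexHull ℝ (magogReal n)) = magogReal n :=
  extremePoints_tsscppPolytope_general n
end
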